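/- For every a ∈ ℤ^ℓ, b ∈ ℤⁿ, j ∈ {1,…,n} and every i ∈ {1,…,ℓ}, k ∈ {1,…,n}, the shift operators satisfy the identities σ_{s_i}(v_{a,b,j}) = v_{a−e_i, b, j} and σ_{ν_k}(v_{a,b,j}) = v_{a, b+e_k, j}, where e_i, e_k are standard basis vectors. Consequently the submodule V_A ⊆ O(X_A) is invariant under all operators σ_{s_i}, σ_{ν_k} and their inverses, so these operators descend to additive bijections of the quotient O(X_A)/V_A. -/

import Mathlib

set_option maxHeartbeats 1000000
set_option synthInstance.maxHeartbeats 400000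

noncomputable section

open MvPolynomial

/-- The polynomial ring ℂ[s₁,…,s_ℓ,ν₁,…,νₙ]. -/
abbrev PRing (l n : ℕ) : Type := MvPolynomial (Fin l ⊕ Fin n) ℂ

/-- The rational function field K = ℂ(s₁,…,s_ℓ,ν₁,…,νₙ). -/
abbrev KK (l n : ℕ) : Type := FractionRing (PRing l n)

/-- The generator s_i of K. -/
def sGen (l n : ℕ) (i : Fin l) : KK l n :=
  algebraMap (PRing l n) (KK l n) (X (Sum.inl i))

/-- The generator ν_j of K. -/
def nuGen (l n : ℕ) (j : Fin n) : KK l n :=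
  algebraMap (PRing l n) (KK l n) (X (Sum.inr j))

/-- The Laurent polynomial ring A[x₁^{±1},…,xₙ^{±1}]. -/
abbrev Laur (n : ℕ) (A : Type) [CommRing A] : Type :=
  AddMonoidAlgebra A (Fin n → ℤ)

/-- The Laurent monomial x^b. -/
def lmono {n : ℕ} {A : Type} [CommRing A] (b : Fin n → ℤ) : Laur n A :=
  AddMonoidAlgebra.single b 1

/-- The partial derivative ∂/∂x_j of a Laurent polynomial. -/
def lpderiv {n : ℕ} {A : Type} [CommRing A] (j : Fin n) (f : Laur n A) : Laur n A :=
  Finsupp.sum f.coeff fun m c => AddMonoidAlgebra.single (m - Pi.single j 1) ((m j : A) * c)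

/-- Coefficientwise map of Laurent polynomial rings along a ring homomorphism. -/
def laurMap {n : ℕ} {A B : Type} [CommRing A] [CommRing B] (φ : A →+* B) :
    Laur n A →+* Laur n B where
  toFun g := AddMonoidAlgebra.ofCoeff (Finsupp.mapRange φ φ.map_zero g.coeff)
  map_one' := (AddMonoidAlgebra.mapRingHom (Fin n → ℤ) φ).map_one
  map_mul' := (AddMonoidAlgebra.mapRingHom (Fin n → ℤ) φ).map_mul
  map_zero' := (AddMonoidAlgebra.mapRingHom (Fin n → ℤ) φ).map_zero
  map_add' := (AddMonoidAlgebra.mapRingHom (Fin n → ℤ) φ).map_add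

end

noncomputable section
/-- The inclusion ℂ → K. -/
def cC (l n : ℕ) : ℂ →+* KK l n := (algebraMap (PRing l n) (KK l n)).comp MvPolynomial.C

/-- The coefficient map ℂ → A obtained from κ : K → A. -/
def cmap {l n : ℕ} {A : Type} [CommRing A] (κ : KK l n →+* A) : ℂ →+* A :=
  κ.comp (cC l n)

/-- The image of the Laurent polynomial f_i in A[x^{±1}]. -/
def fImg {l n : ℕ} (f : Fin l → Laur n ℂ) {A : Type} [CommRing A] (κ : KK l n →+* A)
    (i : Fin l) : Laur n A := laurMap (cmap κ) (f i)

/-- The product f₁ ⋯ f_ℓ in A[x^{±1}]. -/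
def FProd {l n : ℕ} (f : Fin l → Laur n ℂ) {A : Type} [CommRing A] (κ : KK l n →+* A) :
    Laur n A := ∏ i, fImg f κ i

/-- O(X_A) = A[x₁^{±1},…,xₙ^{±1}] localized at f₁⋯f_ℓ. -/
abbrev OX {l n : ℕ} (f : Fin l → Laur n ℂ) {A : Type} [CommRing A] (κ : KK l n →+* A) :
    Type := Localization.Away (FProd f κ)

end

noncomputable section

/-- x_j as a unit of O(X_A). -/
def xU {l n : ℕ} (f : Fin l → Laur n ℂ) {A : Type} [CommRing A] (κ : KK l n →+* A)
    (j : Fin n) : (OX f κ)ˣ where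
  val := algebraMap (Laur n A) (OX f κ) (lmono (Pi.single j 1))
  inv := algebraMap (Laur n A) (OX f κ) (lmono (-Pi.single j 1))
  val_inv := by
    rw [← map_mul]
    simp only [lmono, AddMonoidAlgebra.single_mul_single, add_neg_cancel, one_mul]
    rw [← AddMonoidAlgebra.one_def, map_one]
  inv_val := by
    rw [← map_mul]
    simp only [lmono, AddMonoidAlgebra.single_mul_single, neg_add_cancel, one_mul]
    rw [← AddMonoidAlgebra.one_def, map_one]

lemma fImg_isUnit {l n : ℕ} (f : Fin l → Laur n ℂ) {A : Type} [CommRing A]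
    (κ : KK l n →+* A) (i : Fin l) :
    IsUnit (algebraMap (Laur n A) (OX f κ) (fImg f κ i)) := by
  have h : fImg f κ i ∣ FProd f κ := Finset.dvd_prod_of_mem _ (Finset.mem_univ i)
  exact IsLocalization.Away.isUnit_of_dvd (x := FProd f κ) (S := OX f κ) h

/-- f_i as a unit of O(X_A). -/
def fU {l n : ℕ} (f : Fin l → Laur n ℂ) {A : Type} [CommRing A] (κ : KK l n →+* A)
    (i : Fin l) : (OX f κ)ˣ := (fImg_isUnit f κ i).unit

/-- f^a = f₁^{a₁} ⋯ f_ℓ^{a_ℓ} for an integer vector a. -/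
def fpow {l n : ℕ} (f : Fin l → Laur n ℂ) {A : Type} [CommRing A] (κ : KK l n →+* A)
    (a : Fin l → ℤ) : OX f κ := ↑(∏ i, (fU f κ i) ^ (a i))

end

noncomputable section
/-- The element
v_{a,b,j} = x₁⋯xₙ · f^a · x^b · ((ν_j + δ b_j) x_j^{-1} - Σ_i (s_i - δ a_i) f_i^{-1} ∂f_i/∂x_j)
of O(X_A). -/
def vElt {l n : ℕ} (f : Fin l → Laur n ℂ) {A : Type} [CommRing A] (κ : KK l n →+* A)
    (δ : A) (a : Fin l → ℤ) (b : Fin n → ℤ) (j : Fin n) : OX f κ :=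
  algebraMap (Laur n A) (OX f κ) (lmono fun _ => 1) * fpow f κ a *
    algebraMap (Laur n A) (OX f κ) (lmono b) *
    (algebraMap A (OX f κ) (κ (nuGen l n j) + δ * (b j : A)) * ↑(xU f κ j)⁻¹ -
      ∑ i : Fin l, algebraMap A (OX f κ) (κ (sGen l n i) - δ * (a i : A)) *
        (↑(fU f κ i)⁻¹ * algebraMap (Laur n A) (OX f κ) (lpderiv j (fImg f κ i))))

/-- The A-submodule V_A ⊆ O(X_A) spanned by the elements v_{a,b,j}. -/
def VA {l n : ℕ} (f : Fin l → Laur n ℂ) {A : Type} [CommRing A] (κ : KK l n →+* A)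
    (δ : A) : Submodule A (OX f κ) :=
  Submodule.span A {g | ∃ a b j, g = vElt f κ δ a b j}

/-- The generator w_j = ν_j x_j^{-1} - Σ_i s_i f_i^{-1} ∂f_i/∂x_j of the
likelihood ideal, in O(X_K). -/
def wElt {l n : ℕ} (f : Fin l → Laur n ℂ) (j : Fin n) :
    OX f (RingHom.id (KK l n)) :=
  algebraMap (KK l n) (OX f (RingHom.id (KK l n))) (nuGen l n j) *
      ↑(xU f (RingHom.id (KK l n)) j)⁻¹ -
    ∑ i : Fin l, algebraMap (KK l n) (OX f (RingHom.id (KK l n))) (sGen l n i) *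
      (↑(fU f (RingHom.id (KK l n)) i)⁻¹ *
        algebraMap (Laur n (KK l n)) (OX f (RingHom.id (KK l n)))
          (lpderiv j (fImg f (RingHom.id (KK l n)) i)))

/-- The likelihood ideal I_K ⊆ O(X_K). -/
def likeIdeal {l n : ℕ} (f : Fin l → Laur n ℂ) : Ideal (OX f (RingHom.id (KK l n))) :=
  Ideal.span {g | ∃ j, g = wElt f j}
end

noncomputable section
/-- The generators (s₁,…,s_ℓ,ν₁,…,νₙ) of K. -/
def genK (l n : ℕ) : (Fin l ⊕ Fin n) → KK l n := Sum.elim (sGen l n) (nuGen l n)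

lemma laurMap_comp_apply {n : ℕ} {A B C : Type} [CommRing A] [CommRing B] [CommRing C]
    (θ : B →+* C) (φ : A →+* B) (g : Laur n A) :
    laurMap θ (laurMap φ g) = laurMap (θ.comp φ) g := by
  show AddMonoidAlgebra.ofCoeff (Finsupp.mapRange θ θ.map_zero
    (Finsupp.mapRange φ φ.map_zero g.coeff)) = _
  rw [← Finsupp.mapRange_comp (h := by simp)]
  rfl

lemma laurMap_FProd {l n : ℕ} (f : Fin l → Laur n ℂ) {A B : Type} [CommRing A] [CommRing B]
    (κ₁ : KK l n →+* A) (κ₂ : KK l n →+* B) (θ : A →+* B)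
    (hθ : θ.comp (cmap κ₁) = cmap κ₂) :
    laurMap θ (FProd f κ₁) = FProd f κ₂ := by
  rw [FProd, map_prod]
  refine Finset.prod_congr rfl fun i _ => ?_
  show laurMap θ (laurMap (cmap κ₁) (f i)) = laurMap (cmap κ₂) (f i)
  rw [laurMap_comp_apply, hθ]

/-- The coefficientwise ring homomorphism O(X_A) → O(X_B) induced by a ring
homomorphism θ : A → B compatible with the coefficient maps. -/
def OXmap {l n : ℕ} (f : Fin l → Laur n ℂ) {A B : Type} [CommRing A] [CommRing B]
    (κ₁ : KK l n →+* A) (κ₂ : KK l n →+* B) (θ : A →+* B)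
    (hθ : θ.comp (cmap κ₁) = cmap κ₂) : OX f κ₁ →+* OX f κ₂ :=
  Localization.awayLift ((algebraMap (Laur n B) (OX f κ₂)).comp (laurMap θ)) (FProd f κ₁)
    (by
      rw [RingHom.comp_apply, laurMap_FProd f κ₁ κ₂ θ hθ]
      exact IsLocalization.Away.algebraMap_isUnit _)
end


noncomputable section

/-! Each shift operator has the form g ↦ u · θ(g), where θ is a coefficient automorphism (it fixes
every x_j and every f_i) and u is the unit f_i⁻¹ or x_k. Factor v_{a,b,j} as the prefactor
x₁⋯xₙ f^a x^b times c x_j⁻¹ - Σ_i d_i f_i⁻¹ ∂f_i/∂x_j with c = ν_j + δ b_j, d_i = s_i - δ a_i: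
θ only moves c and d, exactly as the index change a ↦ a - e_i (resp. b ↦ b + e_k) does, and u is
absorbed into the prefactor. Hence each shift permutes the spanning family {v_{a,b,j}}; since it is
bijective and semilinear, it and its inverse preserve V_A and descend to O(X_A)/V_A. -/

section LaurentMap

variable {n : ℕ} {A B : Type} [CommRing A] [CommRing B]

lemma laurMap_eq_mapRingHom (φ : A →+* B) :
    (laurMap φ : Laur n A →+* Laur n B) = AddMonoidAlgebra.mapRingHom (Fin n → ℤ) φ :=
  RingHom.ext fun _ => rfl

lemma laurMap_single (φ : A →+* B) (m : Fin n → ℤ) (c : A) :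
    laurMap φ (AddMonoidAlgebra.single m c) = AddMonoidAlgebra.single m (φ c) := by
  rw [laurMap_eq_mapRingHom, AddMonoidAlgebra.mapRingHom_single]

lemma laurMap_id : (laurMap (RingHom.id A) : Laur n A →+* Laur n A) = RingHom.id _ := by
  rw [laurMap_eq_mapRingHom, AddMonoidAlgebra.mapRingHom_id]

lemma laurMap_lmono (φ : A →+* B) (b : Fin n → ℤ) : laurMap φ (lmono b) = lmono b := by
  rw [lmono, laurMap_single, map_one, lmono]

lemma lmono_add (b b' : Fin n → ℤ) : (lmono (b + b') : Laur n A) = lmono b * lmono b' := by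
  rw [lmono, lmono, lmono, AddMonoidAlgebra.single_mul_single, one_mul]

lemma laurMap_lpderiv (φ : A →+* B) (j : Fin n) (g : Laur n A) :
    laurMap φ (lpderiv j g) = lpderiv j (laurMap φ g) := by
  rw [lpderiv, lpderiv, map_finsuppSum]
  change _ = Finsupp.sum (Finsupp.mapRange φ φ.map_zero g.coeff) _
  rw [Finsupp.sum_mapRange_index (by simp)]
  simp only [laurMap_single, map_mul, map_intCast]

end LaurentMap

theorem map_units_zpow_of_map_eq {M F : Type*} [Monoid M] [FunLike F M M] [MonoidHomClass F M M]
    (φ : F) {u : Mˣ} (hu : φ u = u) (m : ℤ) : φ ↑(u ^ m) = ↑(u ^ m) := by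
  have : Units.map (φ : M →* M) u = u := Units.ext hu
  rw [← MonoidHom.coe_coe φ, ← Units.coe_map, map_zpow, this]

theorem map_units_inv_of_map_eq {M F : Type*} [Monoid M] [FunLike F M M] [MonoidHomClass F M M]
    (φ : F) {u : Mˣ} (hu : φ u = u) : φ ↑u⁻¹ = ↑u⁻¹ := by
  simpa using map_units_zpow_of_map_eq φ hu (-1)

section CoefficientMap

variable {l n : ℕ} {f : Fin l → Laur n ℂ} {A : Type} [CommRing A] {κ : KK l n →+* A}
  {θ θ' : A →+* A} {hθ : θ.comp (cmap κ) = cmap κ} {hθ' : θ'.comp (cmap κ) = cmap κ}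

lemma OXmap_algebraMap {B : Type} [CommRing B] {κ' : KK l n →+* B} {φ : A →+* B}
    {hφ : φ.comp (cmap κ) = cmap κ'} (g : Laur n A) :
    OXmap f κ κ' φ hφ (algebraMap (Laur n A) (OX f κ) g) =
      algebraMap (Laur n B) (OX f κ') (laurMap φ g) := by
  rw [OXmap]
  exact IsLocalization.Away.lift_eq (FProd f κ) _ g

lemma OXmap_algebraMap_coeff (c : A) :
    OXmap f κ κ θ hθ (algebraMap A (OX f κ) c) = algebraMap A (OX f κ) (θ c) := by
  rw [IsScalarTower.algebraMap_apply A (Laur n A) (OX f κ) c,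
    IsScalarTower.algebraMap_apply A (Laur n A) (OX f κ) (θ c), OXmap_algebraMap,
    laurMap_eq_mapRingHom, ← RingHom.comp_apply (AddMonoidAlgebra.mapRingHom _ θ),
    AddMonoidAlgebra.mapRingHom_comp_algebraMap, RingHom.comp_apply]

lemma OXmap_smul (c : A) (g : OX f κ) :
    OXmap f κ κ θ hθ (c • g) = θ c • OXmap f κ κ θ hθ g := by
  rw [Algebra.smul_def, Algebra.smul_def, map_mul, OXmap_algebraMap_coeff]

lemma OXmap_OXmap (hθθ' : θ'.comp θ = RingHom.id A) (g : OX f κ) :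
    OXmap f κ κ θ' hθ' (OXmap f κ κ θ hθ g) = g := by
  suffices (OXmap f κ κ θ' hθ').comp (OXmap f κ κ θ hθ) = RingHom.id _ from
    RingHom.congr_fun this g
  refine IsLocalization.ringHom_ext (Submonoid.powers (FProd f κ)) (RingHom.ext fun x => ?_)
  simp only [RingHom.comp_apply, RingHom.id_apply, OXmap_algebraMap, laurMap_comp_apply, hθθ',
    laurMap_id]

lemma laurMap_fImg (hθ : θ.comp (cmap κ) = cmap κ) (i : Fin l) :
    laurMap θ (fImg f κ i) = fImg f κ i := by
  rw [fImg, laurMap_comp_apply, hθ]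

lemma OXmap_xU (k : Fin n) : OXmap f κ κ θ hθ (xU f κ k) = xU f κ k := by
  rw [xU, Units.val_mk, OXmap_algebraMap, laurMap_lmono]

lemma OXmap_fU (i : Fin l) : OXmap f κ κ θ hθ (fU f κ i) = fU f κ i := by
  rw [fU, IsUnit.unit_spec, OXmap_algebraMap, laurMap_fImg hθ]

end CoefficientMap

section VElt

variable {l n : ℕ} (f : Fin l → Laur n ℂ) {A : Type} [CommRing A] (κ : KK l n →+* A)

def monomialFactor (a : Fin l → ℤ) (b : Fin n → ℤ) : OX f κ :=
  algebraMap (Laur n A) (OX f κ) (lmono fun _ => 1) * fpow f κ a *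
    algebraMap (Laur n A) (OX f κ) (lmono b)

def likelihoodForm (j : Fin n) (c : A) (d : Fin l → A) : OX f κ :=
  algebraMap A (OX f κ) c * ↑(xU f κ j)⁻¹ -
    ∑ i : Fin l, algebraMap A (OX f κ) (d i) *
      (↑(fU f κ i)⁻¹ * algebraMap (Laur n A) (OX f κ) (lpderiv j (fImg f κ i)))

variable {f κ}

lemma vElt_eq_monomialFactor_mul (δ : A) (a : Fin l → ℤ) (b : Fin n → ℤ) (j : Fin n) :
    vElt f κ δ a b j = monomialFactor f κ a b *
      likelihoodForm f κ j (κ (nuGen l n j) + δ * b j) fun i => κ (sGen l n i) - δ * a i :=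
  rfl

lemma fpow_add (a a' : Fin l → ℤ) : fpow f κ (a + a') = fpow f κ a * fpow f κ a' := by
  simp only [fpow, Pi.add_apply, zpow_add, Finset.prod_mul_distrib, Units.val_mul]

lemma fpow_single (i : Fin l) (m : ℤ) : fpow f κ (Pi.single i m) = ↑(fU f κ i ^ m) := by
  simp [fpow, Pi.single_apply]

lemma fU_inv_mul_monomialFactor (i : Fin l) (a : Fin l → ℤ) (b : Fin n → ℤ) :
    ↑(fU f κ i)⁻¹ * monomialFactor f κ a b = monomialFactor f κ (a - Pi.single i 1) b := by
  rw [monomialFactor, monomialFactor, sub_eq_add_neg, ← Pi.single_neg, fpow_add, fpow_single,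
    zpow_neg_one]
  ring

lemma xU_mul_monomialFactor (k : Fin n) (a : Fin l → ℤ) (b : Fin n → ℤ) :
    ↑(xU f κ k) * monomialFactor f κ a b = monomialFactor f κ a (b + Pi.single k 1) := by
  rw [monomialFactor, monomialFactor, lmono_add, map_mul]
  change algebraMap (Laur n A) (OX f κ) (lmono (Pi.single k 1)) * _ = _
  ring

variable {θ : A →+* A} {hθ : θ.comp (cmap κ) = cmap κ}

lemma OXmap_fpow (a : Fin l → ℤ) : OXmap f κ κ θ hθ (fpow f κ a) = fpow f κ a := by
  simp only [fpow, Units.coe_prod, map_prod, map_units_zpow_of_map_eq _ (OXmap_fU _)]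

lemma OXmap_monomialFactor (a : Fin l → ℤ) (b : Fin n → ℤ) :
    OXmap f κ κ θ hθ (monomialFactor f κ a b) = monomialFactor f κ a b := by
  simp only [monomialFactor, map_mul, OXmap_algebraMap, laurMap_lmono, OXmap_fpow]

lemma OXmap_likelihoodForm (j : Fin n) (c : A) (d : Fin l → A) :
    OXmap f κ κ θ hθ (likelihoodForm f κ j c d) = likelihoodForm f κ j (θ c) (θ ∘ d) := by
  simp only [likelihoodForm, map_sub, map_sum, map_mul, OXmap_algebraMap_coeff,
    OXmap_algebraMap, laurMap_lpderiv, laurMap_fImg hθ, Function.comp_apply,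
    map_units_inv_of_map_eq _ (OXmap_xU _), map_units_inv_of_map_eq _ (OXmap_fU _)]

end VElt

section Shift

variable {l n : ℕ} {f : Fin l → Laur n ℂ} {A : Type} [CommRing A] {κ : KK l n →+* A} {δ : A}
  {θ : A →+* A} {hθ : θ.comp (cmap κ) = cmap κ}

lemma map_genK_of_eval₂ {w₀ : Fin l ⊕ Fin n}
    (hτ : ∀ p : PRing l n, θ (κ (algebraMap (PRing l n) (KK l n) p)) =
      MvPolynomial.eval₂ (cmap κ) (fun w => κ (genK l n w) + if w = w₀ then δ else 0) p)
    (w : Fin l ⊕ Fin n) : θ (κ (genK l n w)) = κ (genK l n w) + if w = w₀ then δ else 0 := by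
  have hw : genK l n w = algebraMap (PRing l n) (KK l n) (MvPolynomial.X w) := by cases w <;> rfl
  rw [hw, hτ, MvPolynomial.eval₂_X, ← hw]

lemma fU_inv_mul_OXmap_vElt (hδ : θ δ = δ) (i : Fin l)
    (hgen : ∀ w, θ (κ (genK l n w)) = κ (genK l n w) + if w = Sum.inl i then δ else 0)
    (a : Fin l → ℤ) (b : Fin n → ℤ) (j : Fin n) :
    ↑(fU f κ i)⁻¹ * OXmap f κ κ θ hθ (vElt f κ δ a b j) = vElt f κ δ (a - Pi.single i 1) b j := by
  have hν : θ (κ (nuGen l n j) + δ * b j) = κ (nuGen l n j) + δ * b j := by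
    simpa [hδ, genK] using hgen (.inr j)
  have hs (i' : Fin l) : θ (κ (sGen l n i') - δ * a i') =
      κ (sGen l n i') - δ * (((a - Pi.single i 1 : Fin l → ℤ) i' : ℤ) : A) := by
    have := hgen (.inl i')
    simp only [genK, Sum.elim_inl, Sum.inl.injEq] at this
    simp only [map_sub, map_mul, map_intCast, hδ, this, Pi.sub_apply, Pi.single_apply]
    split_ifs <;> push_cast <;> ring
  rw [vElt_eq_monomialFactor_mul, map_mul, OXmap_monomialFactor, OXmap_likelihoodForm,
    ← mul_assoc, fU_inv_mul_monomialFactor, hν]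
  simp only [Function.comp_def, hs]
  rfl

lemma xU_mul_OXmap_vElt (hδ : θ δ = δ) (k : Fin n)
    (hgen : ∀ w, θ (κ (genK l n w)) = κ (genK l n w) + if w = Sum.inr k then δ else 0)
    (a : Fin l → ℤ) (b : Fin n → ℤ) (j : Fin n) :
    ↑(xU f κ k) * OXmap f κ κ θ hθ (vElt f κ δ a b j) = vElt f κ δ a (b + Pi.single k 1) j := by
  have hν : θ (κ (nuGen l n j) + δ * b j) =
      κ (nuGen l n j) + δ * (((b + Pi.single k 1 : Fin n → ℤ) j : ℤ) : A) := by
    have := hgen (.inr j)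
    simp only [genK, Sum.elim_inr, Sum.inr.injEq] at this
    simp only [map_add, map_mul, map_intCast, hδ, this, Pi.add_apply, Pi.single_apply]
    split_ifs <;> push_cast <;> ring
  have hs (i' : Fin l) : θ (κ (sGen l n i') - δ * a i') = κ (sGen l n i') - δ * a i' := by
    simpa [hδ, genK] using hgen (.inl i')
  rw [vElt_eq_monomialFactor_mul, map_mul, OXmap_monomialFactor, OXmap_likelihoodForm,
    ← mul_assoc, xU_mul_monomialFactor, hν]
  simp only [Function.comp_def, hs]
  rfl

end Shift

lemma RingEquiv.symm_comp_eq_of_comp_eq {R A : Type*} [Semiring R] [Semiring A] (e : A ≃+* A)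
    {g : R →+* A} (h : (e : A →+* A).comp g = g) : (e.symm : A →+* A).comp g = g :=
  RingHom.ext fun c => e.symm_apply_eq.2 (RingHom.congr_fun h c).symm

section Invariance

variable {l n : ℕ} {f : Fin l → Laur n ℂ} {A : Type} [CommRing A] {κ : KK l n →+* A} {δ : A}

lemma vElt_mem_VA (a : Fin l → ℤ) (b : Fin n → ℤ) (j : Fin n) : vElt f κ δ a b j ∈ VA f κ δ :=
  Submodule.subset_span ⟨a, b, j, rfl⟩

lemma mul_OXmap_mem_VA {θ : A →+* A} {hθ : θ.comp (cmap κ) = cmap κ} {w : OX f κ}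
    (hw : ∀ a b j, w * OXmap f κ κ θ hθ (vElt f κ δ a b j) ∈ VA f κ δ) {g : OX f κ}
    (hg : g ∈ VA f κ δ) : w * OXmap f κ κ θ hθ g ∈ VA f κ δ := by
  induction hg using Submodule.span_induction with
  | mem x hx => obtain ⟨a, b, j, rfl⟩ := hx; exact hw a b j
  | zero => simp only [map_zero, mul_zero, zero_mem]
  | add x y _ _ hx hy => simpa only [map_add, mul_add] using add_mem hx hy
  | smul c x _ hx => rw [OXmap_smul, mul_smul_comm]; exact Submodule.smul_mem _ _ hx

variable {τ : A ≃+* A} {hτ : (τ : A →+* A).comp (cmap κ) = cmap κ}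

lemma OXmap_symm_OXmap (g : OX f κ) :
    OXmap f κ κ τ.symm (τ.symm_comp_eq_of_comp_eq hτ) (OXmap f κ κ τ hτ g) = g :=
  OXmap_OXmap (RingHom.ext τ.symm_apply_apply) g

lemma OXmap_OXmap_symm (g : OX f κ) :
    OXmap f κ κ τ hτ (OXmap f κ κ τ.symm (τ.symm_comp_eq_of_comp_eq hτ) g) = g :=
  OXmap_OXmap (RingHom.ext τ.apply_symm_apply) g

variable {u : (OX f κ)ˣ} {φ : (Fin l → ℤ) ≃ (Fin l → ℤ)} {ψ : (Fin n → ℤ) ≃ (Fin n → ℤ)}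

lemma shift_mem_VA
    (hshift : ∀ a b j, ↑u * OXmap f κ κ τ hτ (vElt f κ δ a b j) = vElt f κ δ (φ a) (ψ b) j)
    {g : OX f κ} (hg : g ∈ VA f κ δ) : ↑u * OXmap f κ κ τ hτ g ∈ VA f κ δ :=
  mul_OXmap_mem_VA (fun a b j => hshift a b j ▸ vElt_mem_VA _ _ _) hg

lemma shiftInv_mem_VA
    (hshift : ∀ a b j, ↑u * OXmap f κ κ τ hτ (vElt f κ δ a b j) = vElt f κ δ (φ a) (ψ b) j)
    {g : OX f κ} (hg : g ∈ VA f κ δ) :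
    OXmap f κ κ τ.symm (τ.symm_comp_eq_of_comp_eq hτ) (↑u⁻¹ * g) ∈ VA f κ δ := by
  rw [map_mul]
  refine mul_OXmap_mem_VA (fun a' b' j => ?_) hg
  rw [← map_mul, ← φ.apply_symm_apply a', ← ψ.apply_symm_apply b', ← hshift,
    Units.inv_mul_cancel_left, OXmap_symm_OXmap]
  exact vElt_mem_VA _ _ _

lemma mem_VA_of_shift_mem
    (hshift : ∀ a b j, ↑u * OXmap f κ κ τ hτ (vElt f κ δ a b j) = vElt f κ δ (φ a) (ψ b) j)
    {g : OX f κ} (hg : ↑u * OXmap f κ κ τ hτ g ∈ VA f κ δ) : g ∈ VA f κ δ := by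
  simpa only [Units.inv_mul_cancel_left, OXmap_symm_OXmap] using shiftInv_mem_VA hshift hg

end Invariance

lemma exists_shift_sub_mem_VA {l n : ℕ} {f : Fin l → Laur n ℂ} {A : Type} [CommRing A]
    {κ : KK l n →+* A} (δ : A) {τ : A ≃+* A} (hτ : (τ : A →+* A).comp (cmap κ) = cmap κ)
    (u : (OX f κ)ˣ) (h : OX f κ) : ∃ g, ↑u * OXmap f κ κ τ hτ g - h ∈ VA f κ δ :=
  ⟨OXmap f κ κ τ.symm (τ.symm_comp_eq_of_comp_eq hτ) (↑u⁻¹ * h), by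
    rw [OXmap_OXmap_symm, Units.mul_inv_cancel_left, sub_self]; exact zero_mem _⟩

theorem stmt9_general {l n : ℕ}
    (f : Fin l → Laur n ℂ)
    {A : Type} [CommRing A] (κ : KK l n →+* A) (δ : A)
    -- the substitution automorphisms s_i ↦ s_i + δ and ν_k ↦ ν_k + δ of A
    (τS : Fin l → A ≃+* A) (τN : Fin n → A ≃+* A)
    (hτSC : ∀ i, ((τS i : A →+* A)).comp (cmap κ) = cmap κ)
    (hτSC' : ∀ i, (((τS i).symm : A →+* A)).comp (cmap κ) = cmap κ)
    (hτNC : ∀ k, ((τN k : A →+* A)).comp (cmap κ) = cmap κ)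
    (hτNC' : ∀ k, (((τN k).symm : A →+* A)).comp (cmap κ) = cmap κ)
    (hτSδ : ∀ i, τS i δ = δ) (hτNδ : ∀ k, τN k δ = δ)
    (hτS : ∀ (i : Fin l) (p : PRing l n),
      τS i (κ (algebraMap (PRing l n) (KK l n) p)) =
        MvPolynomial.eval₂ (cmap κ)
          (fun w => κ (genK l n w) + if w = Sum.inl i then δ else 0) p)
    (hτN : ∀ (k : Fin n) (p : PRing l n),
      τN k (κ (algebraMap (PRing l n) (KK l n) p)) =
        MvPolynomial.eval₂ (cmap κ)
          (fun w => κ (genK l n w) + if w = Sum.inr k then δ else 0) p) :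
    -- σ_{s_i}(v_{a,b,j}) = v_{a-e_i,b,j}
    (∀ (i : Fin l) (a : Fin l → ℤ) (b : Fin n → ℤ) (j : Fin n),
      (↑(fU f κ i)⁻¹ : OX f κ) * OXmap f κ κ (τS i) (hτSC i) (vElt f κ δ a b j) =
        vElt f κ δ (a - Pi.single i 1) b j) ∧
    -- σ_{ν_k}(v_{a,b,j}) = v_{a,b+e_k,j}
    (∀ (k : Fin n) (a : Fin l → ℤ) (b : Fin n → ℤ) (j : Fin n),
      (↑(xU f κ k) : OX f κ) * OXmap f κ κ (τN k) (hτNC k) (vElt f κ δ a b j) =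
        vElt f κ δ a (b + Pi.single k 1) j) ∧
    -- V_A is invariant under all shift operators and their inverses
    (∀ i, ∀ g ∈ VA f κ δ,
      (↑(fU f κ i)⁻¹ : OX f κ) * OXmap f κ κ (τS i) (hτSC i) g ∈ VA f κ δ) ∧
    (∀ i, ∀ g ∈ VA f κ δ,
      OXmap f κ κ ((τS i).symm) (hτSC' i) (↑(fU f κ i) * g) ∈ VA f κ δ) ∧
    (∀ k, ∀ g ∈ VA f κ δ,
      (↑(xU f κ k) : OX f κ) * OXmap f κ κ (τN k) (hτNC k) g ∈ VA f κ δ) ∧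
    (∀ k, ∀ g ∈ VA f κ δ,
      OXmap f κ κ ((τN k).symm) (hτNC' k) ((↑(xU f κ k)⁻¹ : OX f κ) * g) ∈ VA f κ δ) ∧
    -- hence the shift operators descend to additive bijections of O(X_A)/V_A
    (∀ i g, (↑(fU f κ i)⁻¹ : OX f κ) * OXmap f κ κ (τS i) (hτSC i) g ∈ VA f κ δ →
      g ∈ VA f κ δ) ∧
    (∀ (i : Fin l) (h : OX f κ), ∃ g,
      (↑(fU f κ i)⁻¹ : OX f κ) * OXmap f κ κ (τS i) (hτSC i) g - h ∈ VA f κ δ) ∧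
    (∀ k g, (↑(xU f κ k) : OX f κ) * OXmap f κ κ (τN k) (hτNC k) g ∈ VA f κ δ →
      g ∈ VA f κ δ) ∧
    (∀ (k : Fin n) (h : OX f κ), ∃ g,
      (↑(xU f κ k) : OX f κ) * OXmap f κ κ (τN k) (hτNC k) g - h ∈ VA f κ δ) := by
  have hS (i : Fin l) (a : Fin l → ℤ) (b : Fin n → ℤ) (j : Fin n) :
      (↑(fU f κ i)⁻¹ : OX f κ) * OXmap f κ κ (τS i) (hτSC i) (vElt f κ δ a b j) =
        vElt f κ δ (Equiv.subRight (Pi.single i 1) a) (Equiv.refl _ b) j :=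
    fU_inv_mul_OXmap_vElt (hτSδ i) i (map_genK_of_eval₂ (hτS i)) a b j
  have hN (k : Fin n) (a : Fin l → ℤ) (b : Fin n → ℤ) (j : Fin n) :
      (↑(xU f κ k) : OX f κ) * OXmap f κ κ (τN k) (hτNC k) (vElt f κ δ a b j) =
        vElt f κ δ (Equiv.refl _ a) (Equiv.addRight (Pi.single k 1) b) j :=
    xU_mul_OXmap_vElt (hτNδ k) k (map_genK_of_eval₂ (hτN k)) a b j
  exact ⟨hS, hN,
    fun i _ => shift_mem_VA (hS i), fun i _ => shiftInv_mem_VA (hS i),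
    fun k _ => shift_mem_VA (hN k), fun k _ => shiftInv_mem_VA (hN k),
    fun i _ => mem_VA_of_shift_mem (hS i), fun i => exists_shift_sub_mem_VA δ (hτSC i) _,
    fun k _ => mem_VA_of_shift_mem (hN k), fun k => exists_shift_sub_mem_VA δ (hτNC k) _⟩

theorem stmt9 {l n : ℕ} (hn : 1 ≤ n) (hl : 1 ≤ l)
    (f : Fin l → Laur n ℂ) (hf : ∀ i, f i ≠ 0)
    {A : Type} [CommRing A] (κ : KK l n →+* A) (δ : A)
    -- the substitution automorphisms s_i ↦ s_i + δ and ν_k ↦ ν_k + δ of A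
    (τS : Fin l → A ≃+* A) (τN : Fin n → A ≃+* A)
    (hτSC : ∀ i, ((τS i : A →+* A)).comp (cmap κ) = cmap κ)
    (hτSC' : ∀ i, (((τS i).symm : A →+* A)).comp (cmap κ) = cmap κ)
    (hτNC : ∀ k, ((τN k : A →+* A)).comp (cmap κ) = cmap κ)
    (hτNC' : ∀ k, (((τN k).symm : A →+* A)).comp (cmap κ) = cmap κ)
    (hτSδ : ∀ i, τS i δ = δ) (hτNδ : ∀ k, τN k δ = δ)
    (hτS : ∀ (i : Fin l) (p : PRing l n),
      τS i (κ (algebraMap (PRing l n) (KK l n) p)) =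
        MvPolynomial.eval₂ (cmap κ)
          (fun w => κ (genK l n w) + if w = Sum.inl i then δ else 0) p)
    (hτN : ∀ (k : Fin n) (p : PRing l n),
      τN k (κ (algebraMap (PRing l n) (KK l n) p)) =
        MvPolynomial.eval₂ (cmap κ)
          (fun w => κ (genK l n w) + if w = Sum.inr k then δ else 0) p) :
    -- σ_{s_i}(v_{a,b,j}) = v_{a-e_i,b,j}
    (∀ (i : Fin l) (a : Fin l → ℤ) (b : Fin n → ℤ) (j : Fin n),
      (↑(fU f κ i)⁻¹ : OX f κ) * OXmap f κ κ (τS i) (hτSC i) (vElt f κ δ a b j) =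
        vElt f κ δ (a - Pi.single i 1) b j) ∧
    -- σ_{ν_k}(v_{a,b,j}) = v_{a,b+e_k,j}
    (∀ (k : Fin n) (a : Fin l → ℤ) (b : Fin n → ℤ) (j : Fin n),
      (↑(xU f κ k) : OX f κ) * OXmap f κ κ (τN k) (hτNC k) (vElt f κ δ a b j) =
        vElt f κ δ a (b + Pi.single k 1) j) ∧
    -- V_A is invariant under all shift operators and their inverses
    (∀ i, ∀ g ∈ VA f κ δ,
      (↑(fU f κ i)⁻¹ : OX f κ) * OXmap f κ κ (τS i) (hτSC i) g ∈ VA f κ δ) ∧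
    (∀ i, ∀ g ∈ VA f κ δ,
      OXmap f κ κ ((τS i).symm) (hτSC' i) (↑(fU f κ i) * g) ∈ VA f κ δ) ∧
    (∀ k, ∀ g ∈ VA f κ δ,
      (↑(xU f κ k) : OX f κ) * OXmap f κ κ (τN k) (hτNC k) g ∈ VA f κ δ) ∧
    (∀ k, ∀ g ∈ VA f κ δ,
      OXmap f κ κ ((τN k).symm) (hτNC' k) ((↑(xU f κ k)⁻¹ : OX f κ) * g) ∈ VA f κ δ) ∧
    -- hence the shift operators descend to additive bijections of O(X_A)/V_A
    (∀ i g, (↑(fU f κ i)⁻¹ : OX f κ) * OXmap f κ κ (τS i) (hτSC i) g ∈ VA f κ δ →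
      g ∈ VA f κ δ) ∧
    (∀ (i : Fin l) (h : OX f κ), ∃ g,
      (↑(fU f κ i)⁻¹ : OX f κ) * OXmap f κ κ (τS i) (hτSC i) g - h ∈ VA f κ δ) ∧
    (∀ k g, (↑(xU f κ k) : OX f κ) * OXmap f κ κ (τN k) (hτNC k) g ∈ VA f κ δ →
      g ∈ VA f κ δ) ∧
    (∀ (k : Fin n) (h : OX f κ), ∃ g,
      (↑(xU f κ k) : OX f κ) * OXmap f κ κ (τN k) (hτNC k) g - h ∈ VA f κ δ) :=
  stmt9_general f κ δ τS τN hτSC hτSC' hτNC hτNC' hτSδ hτNδ hτS hτN
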